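/- Let F ⊂ ℝ^d be the attractor of an IFS of affine contractions f_j = A_j + b_j which is not a singleton, and let μ be a self-affine measure on F. Then there exist constants C₂ > 0, r₀ > 0 and an exponent s₂ > 0 such that μ(B(x,r)) ≤ C₂ r^{s₂} for all x ∈ ℝ^d and all 0 < r ≤ r₀. In particular μ has no atoms. (Upper Frostman regularity of self-affine measures.) -/

import Mathlib

/-!
The cylinders `f_w(F)` of words of length `n` have diameter at most `ρⁿ diam F`, so for `n` large
two of them lie a positive distance `δ` apart and every closed ball of radius `r ≤ δ / 4` misses
one of them. Expanding `μ = ∑_w p_w (f_w)_* μ` and using that `f_w` is `κⁿ`-antilipschitz (so that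
`f_w⁻¹ B(x, r)` lies in a ball of radius `2 κⁿ r`) gives `Φ r ≤ t Φ (K r)` for
`Φ r = sup_x μ B(x, r)`, with `t = 1 - min (p_{w₁}, p_{w₂}) < 1`. Iterating until the radius
exceeds `δ / 4` yields `Φ r ≤ C r ^ s` with `s = log_K (1 / t)`.
-/

open MeasureTheory Metric Finset Filter Topology
open scoped ENNReal NNReal

section WordMap

variable {ι E : Type*}

def wordMap (f : ι → E → E) : (n : ℕ) → (Fin n → ι) → E → E
  | 0, _ => id
  | n + 1, w => f (w 0) ∘ wordMap f n (Fin.tail w)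

theorem wordMap_cons (f : ι → E → E) {n : ℕ} (j : ι) (w : Fin n → ι) :
    wordMap f (n + 1) (Fin.cons j w) = f j ∘ wordMap f n w := rfl

theorem lipschitzWith_wordMap [PseudoEMetricSpace E] {f : ι → E → E} {K : ℝ≥0}
    (hf : ∀ i, LipschitzWith K (f i)) : ∀ n (w : Fin n → ι), LipschitzWith (K ^ n) (wordMap f n w)
  | 0, _ => by rw [pow_zero]; exact LipschitzWith.id
  | n + 1, w => by
    rw [pow_succ']; exact (hf (w 0)).comp (lipschitzWith_wordMap hf n (Fin.tail w))

theorem antilipschitzWith_wordMap [PseudoEMetricSpace E] {f : ι → E → E} {K : ℝ≥0}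
    (hf : ∀ i, AntilipschitzWith K (f i)) :
    ∀ n (w : Fin n → ι), AntilipschitzWith (K ^ n) (wordMap f n w)
  | 0, _ => by rw [pow_zero]; exact AntilipschitzWith.id
  | n + 1, w => by
    rw [pow_succ]; exact (hf (w 0)).comp (antilipschitzWith_wordMap hf n (Fin.tail w))

theorem measurable_wordMap [MeasurableSpace E] {f : ι → E → E} (hf : ∀ i, Measurable (f i)) :
    ∀ n (w : Fin n → ι), Measurable (wordMap f n w)
  | 0, _ => measurable_id
  | n + 1, w => (hf (w 0)).comp (measurable_wordMap hf n (Fin.tail w))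

theorem subset_iUnion_wordMap_image {f : ι → E → E} {F : Set E} (hF : F ⊆ ⋃ i, f i '' F) :
    ∀ n, F ⊆ ⋃ w : Fin n → ι, wordMap f n w '' F
  | 0, a, ha => Set.mem_iUnion.2 ⟨Fin.elim0, a, ha, rfl⟩
  | n + 1, a, ha => by
    obtain ⟨j, y, hy, rfl⟩ := Set.mem_iUnion.1 (hF ha)
    obtain ⟨w, z, hz, rfl⟩ := Set.mem_iUnion.1 (subset_iUnion_wordMap_image hF n hy)
    exact Set.mem_iUnion.2 ⟨Fin.cons j w, z, hz, by rw [wordMap_cons]; rfl⟩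

theorem measure_eq_sum_map_wordMap [Fintype ι] [MeasurableSpace E] {f : ι → E → E}
    (hf : ∀ i, Measurable (f i)) {q : ι → ℝ≥0∞} {μ : Measure E}
    (hμ : μ = ∑ i, q i • μ.map (f i)) :
    ∀ n, μ = ∑ w : Fin n → ι, (∏ k, q (w k)) • μ.map (wordMap f n w)
  | 0 => by simp [wordMap]
  | n + 1 => calc
      μ = ∑ j, q j • μ.map (f j) := hμ
      _ = ∑ j, ∑ w : Fin n → ι,
            (q j * ∏ k, q (w k)) • μ.map (wordMap f (n + 1) (Fin.cons j w)) := by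
        refine Finset.sum_congr rfl fun j _ => ?_
        conv_lhs => rw [measure_eq_sum_map_wordMap hf hμ n]
        rw [Measure.map_finset_sum' (hf j).aemeasurable, Finset.smul_sum]
        refine Finset.sum_congr rfl fun w _ => ?_
        rw [Measure.map_smul, Measure.map_map (hf j) (measurable_wordMap hf n w), wordMap_cons,
          mul_smul]
      _ = ∑ w : Fin (n + 1) → ι, (∏ k, q (w k)) • μ.map (wordMap f (n + 1) w) := by
        rw [← Fintype.sum_prod_type']
        refine Fintype.sum_equiv (Fin.consEquiv fun _ => ι) _ _ fun ⟨j, w⟩ => ?_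
        simp only [Fin.prod_univ_succ]
        rfl

end WordMap

theorem AntilipschitzWith.weaken {α β : Type*} [PseudoEMetricSpace α] [PseudoEMetricSpace β]
    {f : α → β} {K K' : ℝ≥0} (hf : AntilipschitzWith K f) (h : K ≤ K') :
    AntilipschitzWith K' f := fun x y =>
  (hf x y).trans (mul_le_mul_left (ENNReal.coe_le_coe.2 h) _)

section Balls

variable {ι E : Type*} [PseudoMetricSpace E]

theorem measure_preimage_closedBall_le_iSup {α : Type*} [PseudoMetricSpace α] [MeasurableSpace α]
    {f : α → E} {K : ℝ≥0} (hf : AntilipschitzWith K f) (μ : Measure α) (x : E) {r R : ℝ}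
    (hR : 2 * K * r ≤ R) :
    μ (f ⁻¹' closedBall x r) ≤ ⨆ y, μ (closedBall y R) := by
  rcases (f ⁻¹' closedBall x r).eq_empty_or_nonempty with h | ⟨y, hy⟩
  · simp [h]
  refine (measure_mono fun z hz => ?_).trans (le_iSup (fun y => μ (closedBall y R)) y)
  rw [Set.mem_preimage, mem_closedBall] at hy hz
  rw [mem_closedBall]
  calc dist z y ≤ K * dist (f z) (f y) := hf.le_mul_dist z y
    _ ≤ K * (2 * r) := by
      gcongr
      linarith [dist_triangle_right (f z) (f y) x]
    _ ≤ R := by linarith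

theorem measure_closedBall_le_of_disjoint_image [Fintype ι] [MeasurableSpace E]
    [OpensMeasurableSpace E] {f : ι → E → E} (hfm : ∀ i, Measurable (f i)) {K : ℝ≥0}
    (hf : ∀ i, AntilipschitzWith K (f i)) {q : ι → ℝ} (hq : ∀ i, 0 ≤ q i)
    (hqsum : ∑ i, q i = 1) {μ : Measure E} (hμ : μ = ∑ i, ENNReal.ofReal (q i) • μ.map (f i))
    {F : Set E} (hF : μ Fᶜ = 0) {i₀ : ι} {x : E} {r R : ℝ} (hR : 2 * K * r ≤ R)
    (hdisj : Disjoint (closedBall x r) (f i₀ '' F)) :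
    μ (closedBall x r) ≤ ENNReal.ofReal (1 - q i₀) * ⨆ y, μ (closedBall y R) := by
  classical
  have hexpand : μ (closedBall x r) = ∑ i, ENNReal.ofReal (q i) * μ (f i ⁻¹' closedBall x r) := by
    conv_lhs => rw [hμ]
    simp only [Measure.finsetSum_apply, Measure.smul_apply, smul_eq_mul,
      Measure.map_apply (hfm _) measurableSet_closedBall]
  have hmiss : μ (f i₀ ⁻¹' closedBall x r) = 0 :=
    measure_mono_null (fun y hy hyF => Set.disjoint_left.1 hdisj hy ⟨y, hyF, rfl⟩) hF
  calc μ (closedBall x r)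
      = ∑ i ∈ univ.erase i₀, ENNReal.ofReal (q i) * μ (f i ⁻¹' closedBall x r) := by
        rw [hexpand, Finset.sum_erase _ (by rw [hmiss, mul_zero])]
    _ ≤ ∑ i ∈ univ.erase i₀, ENNReal.ofReal (q i) * ⨆ y, μ (closedBall y R) := by
        gcongr with i
        exact measure_preimage_closedBall_le_iSup (hf i) μ x hR
    _ = ENNReal.ofReal (1 - q i₀) * ⨆ y, μ (closedBall y R) := by
        rw [← Finset.sum_mul, ← ENNReal.ofReal_sum_of_nonneg fun i _ => hq i,
          Finset.sum_erase_eq_sub (mem_univ i₀), hqsum]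

theorem exists_separated_images {g : ι → E → E} {c : ℝ≥0} (hg : ∀ i, LipschitzWith c (g i))
    {F : Set E} (hFb : Bornology.IsBounded F) (hF : F ⊆ ⋃ i, g i '' F) {a b : E} (ha : a ∈ F)
    (hb : b ∈ F) (hab : 2 * (c * diam F) < dist a b) :
    ∃ i₁ i₂, i₁ ≠ i₂ ∧ ∃ δ > 0, ∀ y ∈ g i₁ '' F, ∀ z ∈ g i₂ '' F, δ ≤ dist y z := by
  have hdiam : ∀ i, ∀ y ∈ g i '' F, ∀ z ∈ g i '' F, dist y z ≤ c * diam F := fun i y hy z hz =>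
    (dist_le_diam_of_mem ((hg i).isBounded_image hFb) hy hz).trans ((hg i).diam_image_le F hFb)
  obtain ⟨i₁, ha₁⟩ := Set.mem_iUnion.1 (hF ha)
  obtain ⟨i₂, hb₂⟩ := Set.mem_iUnion.1 (hF hb)
  have hsep : ∀ y ∈ g i₁ '' F, ∀ z ∈ g i₂ '' F, dist a b - 2 * (c * diam F) ≤ dist y z :=
    fun y hy z hz => by
      linarith [dist_triangle4 a y z b, hdiam i₁ a ha₁ y hy, hdiam i₂ z hz b hb₂]
  refine ⟨i₁, i₂, ?_, _, by linarith, hsep⟩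
  rintro rfl
  linarith [hsep a ha₁ a ha₁, dist_self a]

theorem closedBall_disjoint_or_disjoint_of_separated {S T : Set E} {δ r : ℝ}
    (hST : ∀ y ∈ S, ∀ z ∈ T, δ ≤ dist y z) (hr : 2 * r < δ) (x : E) :
    Disjoint (closedBall x r) S ∨ Disjoint (closedBall x r) T := by
  by_contra! h
  obtain ⟨y, hyx, hyS⟩ := Set.not_disjoint_iff.1 h.1
  obtain ⟨z, hzx, hzT⟩ := Set.not_disjoint_iff.1 h.2
  rw [mem_closedBall] at hyx hzx
  linarith [hST y hyS z hzT, dist_triangle_right y z x]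

end Balls

theorem le_pow_of_le_mul_comp_mul {Φ : ℝ → ℝ≥0∞} {t K r₀ : ℝ} (hK : 1 ≤ K) (hΦ1 : ∀ r, Φ r ≤ 1)
    (hΦ : ∀ r, 0 < r → r ≤ r₀ → Φ r ≤ ENNReal.ofReal t * Φ (K * r)) :
    ∀ m : ℕ, ∀ r, 0 < r → K ^ m * r ≤ r₀ → Φ r ≤ ENNReal.ofReal t ^ m
  | 0, r, _, _ => by simpa using hΦ1 r
  | m + 1, r, hr, hm => by
    have hr₀ : r ≤ r₀ := (le_mul_of_one_le_left hr.le (one_le_pow₀ hK)).trans hm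
    have hKr : K ^ m * (K * r) ≤ r₀ := by rwa [← mul_assoc, ← pow_succ]
    calc Φ r ≤ ENNReal.ofReal t * Φ (K * r) := hΦ r hr hr₀
      _ ≤ ENNReal.ofReal t * ENNReal.ofReal t ^ m := by
        gcongr
        exact le_pow_of_le_mul_comp_mul hK hΦ1 hΦ m (K * r) (by positivity) hKr
      _ = ENNReal.ofReal t ^ (m + 1) := (pow_succ' _ _).symm

theorem exists_le_mul_rpow_of_le_mul_comp_mul {Φ : ℝ → ℝ≥0∞} {t K r₀ : ℝ} (ht0 : 0 < t)
    (ht1 : t < 1) (hK : 1 < K) (hr₀ : 0 < r₀) (hΦ1 : ∀ r, Φ r ≤ 1)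
    (hΦ : ∀ r, 0 < r → r ≤ r₀ → Φ r ≤ ENNReal.ofReal t * Φ (K * r)) :
    ∃ C > (0 : ℝ), ∃ s > (0 : ℝ), ∀ r, 0 < r → r ≤ r₀ → Φ r ≤ ENNReal.ofReal (C * r ^ s) := by
  have hK0 : 0 < K := by linarith
  set s := Real.logb K t⁻¹
  have hs : 0 < s := Real.logb_pos hK ((one_lt_inv₀ ht0).2 ht1)
  have hts : t = K ^ (-s) := by
    rw [show -s = Real.logb K t by simp [s, Real.logb_inv], Real.rpow_logb hK0 hK.ne' ht0]
  refine ⟨(K / r₀) ^ s, by positivity, s, hs, fun r hr hrr₀ => ?_⟩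
  obtain ⟨m, hm, hm'⟩ := exists_nat_pow_near ((one_le_div hr).2 hrr₀) hK
  rw [le_div_iff₀ hr] at hm
  rw [div_lt_iff₀ hr, pow_succ, mul_assoc] at hm'
  have htm : t ^ m ≤ (K / r₀) ^ s * r ^ s := by
    calc t ^ m = ((K ^ m)⁻¹) ^ s := by
          rw [hts, ← Real.rpow_mul_natCast hK0.le, mul_comm, Real.rpow_natCast_mul hK0.le,
            Real.rpow_neg (by positivity), Real.inv_rpow (by positivity)]
      _ ≤ (K * r / r₀) ^ s := by
          gcongr
          rw [inv_le_comm₀ (by positivity) (by positivity), inv_div, div_le_iff₀ (by positivity)]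
          exact hm'.le
      _ = (K / r₀) ^ s * r ^ s := by rw [mul_div_right_comm, Real.mul_rpow (by positivity) hr.le]
  calc Φ r ≤ ENNReal.ofReal t ^ m := le_pow_of_le_mul_comp_mul hK.le hΦ1 hΦ m r hr hm
    _ = ENNReal.ofReal (t ^ m) := (ENNReal.ofReal_pow ht0.le m).symm
    _ ≤ ENNReal.ofReal ((K / r₀) ^ s * r ^ s) := ENNReal.ofReal_le_ofReal htm

theorem measure_singleton_eq_zero_of_le_rpow {E : Type*} [PseudoMetricSpace E] [MeasurableSpace E]
    {μ : Measure E} {x : E} {C s r₀ : ℝ} (hs : 0 < s) (hr₀ : 0 < r₀)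
    (h : ∀ r, 0 < r → r ≤ r₀ → μ (closedBall x r) ≤ ENNReal.ofReal (C * r ^ s)) : μ {x} = 0 := by
  have hlim : Tendsto (fun r : ℝ => ENNReal.ofReal (C * r ^ s)) (𝓝[>] 0) (𝓝 0) := by
    have h0 : Tendsto (fun r : ℝ => C * r ^ s) (𝓝 0) (𝓝 0) := by
      simpa [Real.zero_rpow hs.ne'] using
        ((Real.continuousAt_rpow_const 0 s (Or.inr hs.le)).tendsto.const_mul C)
    simpa using ENNReal.tendsto_ofReal (h0.mono_left nhdsWithin_le_nhds)
  refine nonpos_iff_eq_zero.1 (ge_of_tendsto hlim ?_)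
  filter_upwards [Ioo_mem_nhdsGT hr₀] with r hr
  exact (measure_mono (Set.singleton_subset_iff.2 (mem_closedBall_self hr.1.le))).trans
    (h r hr.1 hr.2.le)

theorem exists_measure_closedBall_le_rpow {ι E : Type*} [Fintype ι] [MetricSpace E]
    [MeasurableSpace E] [BorelSpace E] {f : ι → E → E} {ρ κ : ℝ≥0} (hρ : ρ < 1)
    (hlip : ∀ i, LipschitzWith ρ (f i)) (hanti : ∀ i, AntilipschitzWith κ (f i)) {p : ι → ℝ}
    (hp : ∀ i, 0 < p i) (hpsum : ∑ i, p i = 1) {F : Set E} (hFb : Bornology.IsBounded F)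
    (hF : F ⊆ ⋃ i, f i '' F) (hFnt : F.Nontrivial) {μ : Measure E} [IsProbabilityMeasure μ]
    (hμ : μ = ∑ i, ENNReal.ofReal (p i) • μ.map (f i)) (hsupp : μ Fᶜ = 0) :
    ∃ C > (0 : ℝ), ∃ s > (0 : ℝ), ∃ r₀ > (0 : ℝ), ∀ x r, 0 < r → r ≤ r₀ →
      μ (closedBall x r) ≤ ENNReal.ofReal (C * r ^ s) := by
  classical
  have hfm : ∀ i, Measurable (f i) := fun i => (hlip i).continuous.measurable
  obtain ⟨a, ha, b, hb, hab⟩ := hFnt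
  obtain ⟨n, hn⟩ : ∃ n : ℕ, 2 * ((ρ : ℝ) ^ n * diam F) < dist a b := by
    have h : Tendsto (fun n : ℕ => 2 * ((ρ : ℝ) ^ n * diam F)) atTop (𝓝 0) := by
      simpa using ((tendsto_pow_atTop_nhds_zero_of_lt_one ρ.coe_nonneg hρ).mul_const
        (diam F)).const_mul 2
    exact (h.eventually (gt_mem_nhds (dist_pos.2 hab))).exists
  obtain ⟨w₁, w₂, hw, δ, hδ, hsep⟩ := exists_separated_images (lipschitzWith_wordMap hlip n)
    hFb (subset_iUnion_wordMap_image hF n) ha hb (by exact_mod_cast hn)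
  set P : (Fin n → ι) → ℝ := fun w => ∏ k, p (w k)
  have hP : ∀ w, 0 < P w := fun w => prod_pos fun k _ => hp (w k)
  have hPsum : ∑ w, P w = 1 := by simp only [P, ← Fintype.prod_sum, hpsum, prod_const_one]
  have hμn : μ = ∑ w, ENNReal.ofReal (P w) • μ.map (wordMap f n w) := by
    simpa only [P, ENNReal.ofReal_prod_of_nonneg fun k _ => (hp _).le] using
      measure_eq_sum_map_wordMap hfm hμ n
  have hP₁₂ : P w₁ + P w₂ ≤ 1 := by
    rw [← sum_pair hw, ← hPsum]
    exact sum_le_univ_sum_of_nonneg fun w => (hP w).le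
  set t := 1 - min (P w₁) (P w₂)
  set K := max (2 * (κ : ℝ) ^ n) 2
  set Φ : ℝ → ℝ≥0∞ := fun r => ⨆ y, μ (closedBall y r)
  have hΦ : ∀ r, 0 < r → r ≤ δ / 4 → Φ r ≤ ENNReal.ofReal t * Φ (K * r) := by
    intro r hr hrδ
    refine iSup_le fun x => ?_
    have hR : 2 * ((κ ^ n : ℝ≥0) : ℝ) * r ≤ K * r := by push_cast; gcongr; exact le_max_left _ _
    rcases closedBall_disjoint_or_disjoint_of_separated hsep (r := r) (by linarith) x with h | h
    all_goals
      refine (measure_closedBall_le_of_disjoint_image (measurable_wordMap hfm n)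
        (antilipschitzWith_wordMap hanti n) (fun w => (hP w).le) hPsum hμn hsupp hR h).trans ?_
      gcongr
      simp only [t]
      linarith [min_le_left (P w₁) (P w₂), min_le_right (P w₁) (P w₂)]
  obtain ⟨C, hC, s, hs, hΦs⟩ := exists_le_mul_rpow_of_le_mul_comp_mul (t := t) (K := K)
    (by simp only [t]; linarith [min_le_left (P w₁) (P w₂), hP w₂])
    (by simp only [t]; linarith [lt_min (hP w₁) (hP w₂)])
    (by linarith [le_max_right (2 * (κ : ℝ) ^ n) 2]) (by positivity)
    (fun r => iSup_le fun _ => prob_le_one) hΦ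
  exact ⟨C, hC, s, hs, δ / 4, by positivity, fun x r hr hrδ =>
    (le_iSup (fun y => μ (closedBall y r)) x).trans (hΦs r hr hrδ)⟩

theorem stmt3_general {d : ℕ} {𝒜 : Type*} [Fintype 𝒜]
    (A : 𝒜 → (EuclideanSpace ℝ (Fin d)) ≃L[ℝ] (EuclideanSpace ℝ (Fin d)))
    (b : 𝒜 → EuclideanSpace ℝ (Fin d)) (p : 𝒜 → ℝ)
    (hA : ∀ j, ‖((A j : EuclideanSpace ℝ (Fin d) →L[ℝ] EuclideanSpace ℝ (Fin d)))‖ < 1)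
    (hp0 : ∀ j, 0 < p j) (hpsum : ∑ j, p j = 1)
    (f : 𝒜 → EuclideanSpace ℝ (Fin d) → EuclideanSpace ℝ (Fin d))
    (hf : ∀ j x, f j x = A j x + b j)
    (F : Set (EuclideanSpace ℝ (Fin d))) (hFc : IsCompact F)
    (hFinv : F = ⋃ j, f j '' F) (hFnt : F.Nontrivial)
    (μ : Measure (EuclideanSpace ℝ (Fin d))) [IsProbabilityMeasure μ]
    (hμ : μ = ∑ j, ENNReal.ofReal (p j) • μ.map (f j))
    (hsupp : μ Fᶜ = 0) :
    ∃ C₂ > (0:ℝ), ∃ s₂ > (0:ℝ), ∃ r₀ > (0:ℝ),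
      (∀ (x : EuclideanSpace ℝ (Fin d)) (r : ℝ), 0 < r → r ≤ r₀ →
        μ (ball x r) ≤ ENNReal.ofReal (C₂ * r ^ s₂)) ∧
      ∀ x : EuclideanSpace ℝ (Fin d), μ {x} = 0 := by
  set ρ := univ.sup fun i => ‖(A i).toContinuousLinearMap‖₊
  set κ := univ.sup fun i => ‖(A i).symm.toContinuousLinearMap‖₊
  have hf' : ∀ j, f j = (· + b j) ∘ A j := fun j => funext (hf j)
  have hlip : ∀ j, LipschitzWith ρ (f j) := fun j => by
    rw [hf']
    exact ((isometry_add_right (b j)).lipschitz.comp (A j).lipschitz).weaken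
      (by simpa using le_sup (f := fun i => ‖(A i).toContinuousLinearMap‖₊) (mem_univ j))
  have hanti : ∀ j, AntilipschitzWith κ (f j) := fun j => by
    rw [hf']
    exact ((isometry_add_right (b j)).antilipschitz.comp (A j).antilipschitz).weaken
      (by simpa using le_sup (f := fun i => ‖(A i).symm.toContinuousLinearMap‖₊) (mem_univ j))
  have hρ : ρ < 1 := (Finset.sup_lt_iff zero_lt_one).2 fun j _ => by exact_mod_cast hA j
  obtain ⟨C, hC, s, hs, r₀, hr₀, hball⟩ := exists_measure_closedBall_le_rpow hρ hlip hanti hp0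
    hpsum hFc.isBounded hFinv.le hFnt hμ hsupp
  exact ⟨C, hC, s, hs, r₀, hr₀, fun x r hr hrr₀ =>
    (measure_mono ball_subset_closedBall).trans (hball x r hr hrr₀),
    fun x => measure_singleton_eq_zero_of_le_rpow hs hr₀ (hball x)⟩

/-- Upper Frostman regularity of self-affine measures; in particular they have no atoms. -/
theorem stmt3 {d : ℕ} {𝒜 : Type*} [Fintype 𝒜]
    (A : 𝒜 → (EuclideanSpace ℝ (Fin d)) ≃L[ℝ] (EuclideanSpace ℝ (Fin d)))
    (b : 𝒜 → EuclideanSpace ℝ (Fin d)) (p : 𝒜 → ℝ)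
    (hA : ∀ j, ‖((A j : EuclideanSpace ℝ (Fin d) →L[ℝ] EuclideanSpace ℝ (Fin d)))‖ < 1)
    (hp0 : ∀ j, 0 < p j) (hp1 : ∀ j, p j < 1) (hpsum : ∑ j, p j = 1)
    (f : 𝒜 → EuclideanSpace ℝ (Fin d) → EuclideanSpace ℝ (Fin d))
    (hf : ∀ j x, f j x = A j x + b j)
    (F : Set (EuclideanSpace ℝ (Fin d))) (hFc : IsCompact F) (hFne : F.Nonempty)
    (hFinv : F = ⋃ j, f j '' F) (hFnt : F.Nontrivial)
    (μ : Measure (EuclideanSpace ℝ (Fin d))) [IsProbabilityMeasure μ]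
    (hμ : μ = ∑ j, ENNReal.ofReal (p j) • μ.map (f j))
    (hsupp : μ Fᶜ = 0) :
    ∃ C₂ > (0:ℝ), ∃ s₂ > (0:ℝ), ∃ r₀ > (0:ℝ),
      (∀ (x : EuclideanSpace ℝ (Fin d)) (r : ℝ), 0 < r → r ≤ r₀ →
        μ (ball x r) ≤ ENNReal.ofReal (C₂ * r ^ s₂)) ∧
      ∀ x : EuclideanSpace ℝ (Fin d), μ {x} = 0 :=
  stmt3_general A b p hA hp0 hpsum f hf F hFc hFinv hFnt μ hμ hsupp
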